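/- arXiv:1206.2459 — 5 statements merged into one kernel-verified Lean document; each statement's English description precedes it below -/
import Mathlib

section
/- For any probability measures P and Q on a measurable space (X, 𝓐) with densities p, q with respect to a common σ-finite dominating measure μ, the Rényi divergence of order 0 has the closed form D_0(P‖Q) = −log Q({x ∈ X : p(x) > 0}). -/
open MeasureTheory Real Filter Set
open scoped ENNReal NNReal Topology Classical

/-- The Hellinger integral `∫ p^α q^(1-α) dμ`, computed with the dominating
measure `μ = P + Q` (the value does not depend on the choice of dominating
measure). The `ℝ≥0∞`-valued `rpow` automatically implements the conventions
`0/0 = 0` and `x/0 = ∞` for `x > 0` when `α > 1`. -/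
noncomputable def hellingerInt {X : Type*} [MeasurableSpace X]
    (α : ℝ) (P Q : Measure X) : ℝ≥0∞ :=
  ∫⁻ x, P.rnDeriv (P + Q) x ^ α * Q.rnDeriv (P + Q) x ^ (1 - α) ∂(P + Q)

/-- Rényi divergence of a simple order `α ∈ (0,1) ∪ (1,∞)`:
`D_α(P‖Q) = (α-1)⁻¹ log ∫ p^α q^(1-α) dμ`. -/
noncomputable def renyiSimple {X : Type*} [MeasurableSpace X]
    (α : ℝ) (P Q : Measure X) : EReal :=
  (((α - 1)⁻¹ : ℝ) : EReal) * ENNReal.log (hellingerInt α P Q)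

/-- Rényi divergence of any order `α ∈ [0,∞]`.  The extended orders `0`, `1`, `∞`
are defined as the limits of the simple orders (the limits exist by monotonicity
in the order, so they coincide with the `limsup`s used here). -/
noncomputable def renyiDiv {X : Type*} [MeasurableSpace X]
    (α : ℝ≥0∞) (P Q : Measure X) : EReal :=
  if α = 0 then Filter.limsup (fun a : ℝ => renyiSimple a P Q) (nhdsWithin (0:ℝ) (Set.Ioi 0))
  else if α = 1 then Filter.limsup (fun a : ℝ => renyiSimple a P Q) (nhdsWithin (1:ℝ) (Set.Iio 1))
  else if α = ∞ then Filter.limsup (fun a : ℝ => renyiSimple a P Q) Filter.atTop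
  else renyiSimple α.toReal P Q

/-- Kullback-Leibler divergence `D(P‖Q) = ∫ p log (p/q) dμ`, with the conventions
`0 log (0/q) = 0` and `p log (p/0) = ∞` for `p > 0`; in particular `D(P‖Q) = ∞`
whenever `P` is not absolutely continuous w.r.t. `Q`, or the integral diverges. -/
noncomputable def klDiv {X : Type*} [MeasurableSpace X] (P Q : Measure X) : EReal :=
  if P ≪ Q ∧ Integrable (llr P Q) P then ((∫ x, llr P Q x ∂P : ℝ) : EReal) else ⊤

/-! Let `r`, `s` be the densities of `P`, `Q` with respect to `P + Q`. As `α ↓ 0` the integrand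
`r ^ α * s ^ (1 - α)` of the Hellinger integral tends to `s` on `{r ≠ 0}` and to `0` elsewhere,
and it is bounded by `1`, so by dominated convergence the Hellinger integral tends to
`Q {r ≠ 0}` and `D_α(P‖Q)` tends to `-log Q {r ≠ 0}`. Since `p` and `r` are both densities of `P`,
the sets `{p ≠ 0}` and `{r ≠ 0}` differ by a set that is null for `μ` and `P + Q`, hence for `Q`. -/

theorem ENNReal.continuousAt_const_rpow {x : ℝ≥0∞} (hx : x ≠ ∞) {b : ℝ} (h : x ≠ 0 ∨ 0 < b) :
    ContinuousAt (fun a : ℝ => x ^ a) b := by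
  rcases eq_or_ne x 0 with rfl | hx0
  · have hb : 0 < b := h.resolve_left (not_not.mpr rfl)
    refine tendsto_const_nhds.congr' ?_
    filter_upwards [lt_mem_nhds hb] with a ha
    rw [ENNReal.zero_rpow_of_pos hb, ENNReal.zero_rpow_of_pos ha]
  · have hpos : 0 < x.toReal := ENNReal.toReal_pos hx0 hx
    have hofReal : (fun a : ℝ => x ^ a) = fun a => ENNReal.ofReal (x.toReal ^ a) := by
      funext a
      rw [← ENNReal.ofReal_rpow_of_pos hpos, ENNReal.ofReal_toReal hx]
    rw [hofReal]
    exact ENNReal.continuous_ofReal.continuousAt.comp (Real.continuousAt_const_rpow hpos.ne')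

/-- As `a ↓ 0`, `r ^ a` tends to `1` unless `r = 0`, where it is identically `0`. -/
theorem tendsto_rpow_mul_rpow_one_sub_nhdsGT_zero {r s : ℝ≥0∞} (hr : r ≠ ∞) (hs : s ≠ ∞) :
    Tendsto (fun a : ℝ => r ^ a * s ^ (1 - a)) (𝓝[>] 0) (𝓝 (if r = 0 then 0 else s)) := by
  split_ifs with hr0
  · refine tendsto_const_nhds.congr' ?_
    filter_upwards [self_mem_nhdsWithin] with a (ha : 0 < a)
    rw [hr0, ENNReal.zero_rpow_of_pos ha, zero_mul]
  · have hr1 : Tendsto (fun a : ℝ => r ^ a) (𝓝 0) (𝓝 1) := by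
      simpa using (ENNReal.continuousAt_const_rpow hr (b := 0) (.inl hr0)).tendsto
    have hs1 : Tendsto (fun a : ℝ => s ^ (1 - a)) (𝓝 0) (𝓝 s) := by
      have hsub : Tendsto (fun a : ℝ => 1 - a) (𝓝 0) (𝓝 1) := by
        simpa using (continuous_sub_left (1 : ℝ)).tendsto 0
      simpa [Function.comp_def] using
        (ENNReal.continuousAt_const_rpow hs (b := 1) (.inr one_pos)).tendsto.comp hsub
    simpa using (ENNReal.Tendsto.mul hr1 (.inl one_ne_zero) hs1 (.inr ENNReal.one_ne_top)).mono_left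
      nhdsWithin_le_nhds

theorem tendsto_hellingerInt_nhdsGT_zero {X : Type*} [MeasurableSpace X] (P Q : Measure X)
    [IsFiniteMeasure P] [IsFiniteMeasure Q] :
    Tendsto (fun a : ℝ => hellingerInt a P Q) (𝓝[>] 0)
      (𝓝 (Q (Function.support (P.rnDeriv (P + Q))))) := by
  set r := P.rnDeriv (P + Q)
  set s := Q.rnDeriv (P + Q)
  have hS : MeasurableSet (Function.support r) :=
    measurableSet_support (Measure.measurable_rnDeriv _ _)
  have hr : r ≤ᵐ[P + Q] 1 := Measure.rnDeriv_le_one_of_le (Measure.le_add_right le_rfl)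
  have hs : s ≤ᵐ[P + Q] 1 := Measure.rnDeriv_le_one_of_le (Measure.le_add_left le_rfl)
  have hlimit :
      Q (Function.support r) = ∫⁻ x, (Function.support r).indicator s x ∂(P + Q) := by
    rw [lintegral_indicator hS, Measure.setLIntegral_rnDeriv' (.add_right' .rfl P) hS]
  rw [hlimit]
  refine tendsto_lintegral_filter_of_dominated_convergence 1
    (.of_forall fun a => (by fun_prop : Measurable fun x => r x ^ a * s x ^ (1 - a))) ?_
    (by simp) ?_
  · filter_upwards [Ioo_mem_nhdsGT (zero_lt_one' ℝ)] with a ha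
    filter_upwards [hr, hs] with x hrx hsx
    calc r x ^ a * s x ^ (1 - a) ≤ 1 * 1 :=
          mul_le_mul' (ENNReal.rpow_le_one hrx ha.1.le)
            (ENNReal.rpow_le_one hsx (by linarith [ha.2]))
      _ = 1 := one_mul 1
  · filter_upwards [hr, hs] with x hrx hsx
    have hlim := tendsto_rpow_mul_rpow_one_sub_nhdsGT_zero
      (ne_top_of_le_ne_top ENNReal.one_ne_top hrx) (ne_top_of_le_ne_top ENNReal.one_ne_top hsx)
    convert hlim using 2
    simp [Set.indicator_apply]

theorem tendsto_renyiSimple_nhdsGT_zero {X : Type*} [MeasurableSpace X] {P Q : Measure X}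
    {h : ℝ≥0∞} (hH : Tendsto (fun a : ℝ => hellingerInt a P Q) (𝓝[>] 0) (𝓝 h)) :
    Tendsto (fun a : ℝ => renyiSimple a P Q) (𝓝[>] 0) (𝓝 (-ENNReal.log h)) := by
  have hcoef :
      Tendsto (fun a : ℝ => (((a - 1)⁻¹ : ℝ) : EReal)) (𝓝[>] 0) (𝓝 ((-1 : ℝ) : EReal)) := by
    rw [EReal.tendsto_coe]
    have hcont : ContinuousAt (fun a : ℝ => (a - 1)⁻¹) 0 := by fun_prop (disch := norm_num)
    simpa using hcont.tendsto.mono_left nhdsWithin_le_nhds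
  have hmul :
      ContinuousAt (fun z : EReal × EReal => z.1 * z.2) (((-1 : ℝ) : EReal), ENNReal.log h) :=
    EReal.continuousAt_mul (.inl (by simp)) (.inl (by simp)) (.inl (EReal.coe_ne_bot _))
      (.inl (EReal.coe_ne_top _))
  have hlim := hmul.tendsto.comp (hcoef.prodMk_nhds ((ENNReal.continuous_log.tendsto h).comp hH))
  rwa [EReal.coe_neg, EReal.coe_one, neg_one_mul] at hlim

theorem renyiDiv_zero_eq_neg_log_measure_support_rnDeriv {X : Type*} [MeasurableSpace X]
    (P Q : Measure X) [IsFiniteMeasure P] [IsFiniteMeasure Q] :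
    renyiDiv 0 P Q = -ENNReal.log (Q (Function.support (P.rnDeriv (P + Q)))) := by
  rw [renyiDiv, if_pos rfl]
  exact (tendsto_renyiSimple_nhdsGT_zero (tendsto_hellingerInt_nhdsGT_zero P Q)).limsup_eq

theorem support_ae_le_of_withDensity_eq {X : Type*} [MeasurableSpace X] {μ ν Q : Measure X}
    {f g : X → ℝ≥0∞} (hf : AEMeasurable f μ) (hg : AEMeasurable g ν)
    (h : μ.withDensity f = ν.withDensity g) (hQ : Q ≪ μ) :
    Function.support f ≤ᵐ[Q] Function.support g := by
  rw [ae_le_set]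
  apply hQ
  have hg0 : ν.withDensity g (Function.support f \ Function.support g) = 0 := by
    rw [withDensity_apply_eq_zero' hg]
    exact (congrArg ν (Set.inter_sdiff_self _ _)).trans measure_empty
  rw [← h, withDensity_apply_eq_zero' hf] at hg0
  change μ (Function.support f ∩ _) = 0 at hg0
  rwa [Set.inter_eq_right.mpr Set.sdiff_subset] at hg0

theorem renyiDiv_zero_eq_neg_log_general
    {X : Type*} [MeasurableSpace X] (P Q : Measure X)
    [IsProbabilityMeasure P] [IsProbabilityMeasure Q]
    (μ : Measure X) (p q : X → ℝ≥0∞)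
    (hp : Measurable p)
    (hP : P = μ.withDensity p) (hQ : Q = μ.withDensity q) :
    renyiDiv 0 P Q = - ENNReal.log (Q {x | 0 < p x}) := by
  have hPν : (P + Q).withDensity (P.rnDeriv (P + Q)) = P :=
    Measure.withDensity_rnDeriv_eq _ _ (.add_right .rfl Q)
  have hsupport : Function.support p =ᵐ[Q] Function.support (P.rnDeriv (P + Q)) :=
    (support_ae_le_of_withDensity_eq hp.aemeasurable (Measure.measurable_rnDeriv _ _).aemeasurable
      (hP.symm.trans hPν.symm) (hQ ▸ withDensity_absolutelyContinuous μ q)).antisymm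
    (support_ae_le_of_withDensity_eq (Measure.measurable_rnDeriv _ _).aemeasurable hp.aemeasurable
      (hPν.trans hP) (.add_right' .rfl P))
  have hset : {x | 0 < p x} = Function.support p := by
    ext x
    simp [pos_iff_ne_zero]
  rw [renyiDiv_zero_eq_neg_log_measure_support_rnDeriv, hset, measure_congr hsupport]

/-- **Order 0.** For probability measures `P, Q` with densities `p, q` with respect to
a common σ-finite dominating measure `μ`, the Rényi divergence of order `0` has the
closed form `D_0(P‖Q) = - log Q({x | p(x) > 0})`. -/
theorem renyiDiv_zero_eq_neg_log
    {X : Type*} [MeasurableSpace X] (P Q : Measure X)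
    [IsProbabilityMeasure P] [IsProbabilityMeasure Q]
    (μ : Measure X) [SigmaFinite μ] (p q : X → ℝ≥0∞)
    (hp : Measurable p) (hq : Measurable q)
    (hP : P = μ.withDensity p) (hQ : Q = μ.withDensity q) :
    renyiDiv 0 P Q = - ENNReal.log (Q {x | 0 < p x}) :=
  renyiDiv_zero_eq_neg_log_general P Q μ p q hp hP hQ
end

section
/- (Data processing inequality.) For any order α ∈ [0,∞], any probability measures P and Q on a measurable space (X, 𝓐), and any sub-σ-algebra 𝓖 ⊆ 𝓐, the Rényi divergence of the restrictions satisfies D_α(P|𝓖 ‖ Q|𝓖) ≤ D_α(P‖Q). -/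
open MeasureTheory Real Filter Set
open scoped ENNReal NNReal Topology Classical

/-! For `0 < α < 1`, weighted AM–GM gives `p^α q^(1-α) ≤ α t^(α-1) p + (1-α) t^α q` for every
`t`, with equality at `t = p/q`; for `α > 1` it gives
`α s^(α-1) p ≤ p^α q^(1-α) + (α-1) s^α q`. Take for `t` and `s` the likelihood ratio of the
restricted measures: it is `m`-measurable, so the integrals of its powers against `P`, `Q` equal
those against `P|m`, `Q|m`. Integrating the two bounds then shows that restriction to `m` raises
the Hellinger integral `∫ p^α q^(1-α)` when `α < 1` and lowers it when `α > 1` (there after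
truncating the ratio, so that the terms to be cancelled are finite). The sign of `(α - 1)⁻¹` turns
both into the inequality for `D_α`, and the extended orders follow in the limit. -/

namespace ENNReal

theorem geom_mean_le_arith_mean2_weighted {w : ℝ} (hw₀ : 0 < w) (hw₁ : w < 1) (x y : ℝ≥0∞) :
    x ^ w * y ^ (1 - w) ≤ ENNReal.ofReal w * x + ENNReal.ofReal (1 - w) * y := by
  have hw₁' : 0 < 1 - w := by linarith
  rcases eq_or_ne x ⊤ with rfl | hx
  · rcases eq_or_ne y 0 with rfl | hy
    · simp [zero_rpow_of_pos hw₁']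
    · simp [mul_top, hw₀.not_ge]
  rcases eq_or_ne y ⊤ with rfl | hy
  · simp [mul_top, hw₁'.not_ge]
  lift x to ℝ≥0 using hx
  lift y to ℝ≥0 using hy
  have hsum : w.toNNReal + (1 - w).toNNReal = 1 := by
    rw [← Real.toNNReal_add hw₀.le hw₁'.le, add_sub_cancel, Real.toNNReal_one]
  have h := NNReal.geom_mean_le_arith_mean2_weighted _ _ x y hsum
  rw [Real.coe_toNNReal _ hw₀.le, Real.coe_toNNReal _ hw₁'.le] at h
  rw [← coe_rpow_of_nonneg x hw₀.le, ← coe_rpow_of_nonneg y hw₁'.le, ENNReal.ofReal,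
    ENNReal.ofReal]
  exact_mod_cast h

theorem rpow_mul_rpow_le_of_lt_one {α : ℝ} (h₀ : 0 < α) (h₁ : α < 1) (p q t : ℝ≥0∞) :
    p ^ α * q ^ (1 - α)
      ≤ ENNReal.ofReal α * (p * t ^ (α - 1)) + ENNReal.ofReal (1 - α) * (q * t ^ α) := by
  have h₁' : 0 < 1 - α := by linarith
  rcases eq_or_ne t 0 with rfl | ht₀
  · rcases eq_or_ne p 0 with rfl | hp
    · simp [zero_rpow_of_pos h₀]
    · simp [zero_rpow_of_neg (sub_neg.2 h₁), mul_top, hp, h₀.not_ge]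
  rcases eq_or_ne t ⊤ with rfl | ht
  · rcases eq_or_ne q 0 with rfl | hq
    · simp [zero_rpow_of_pos h₁']
    · simp [top_rpow_of_pos h₀, mul_top, hq, h₁'.not_ge]
  -- `t` cancels: `(p t^(α-1))^α (q t^α)^(1-α) = p^α q^(1-α)`
  convert geom_mean_le_arith_mean2_weighted h₀ h₁ (p * t ^ (α - 1)) (q * t ^ α) using 1
  rw [mul_rpow_of_nonneg _ _ h₀.le, mul_rpow_of_nonneg _ _ h₁'.le, ← rpow_mul, ← rpow_mul,
    mul_mul_mul_comm, ← rpow_add _ _ ht₀ ht, show (α - 1) * α + α * (1 - α) = 0 by ring,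
    rpow_zero, mul_one]

theorem mul_rpow_sub_one_le_of_one_lt {α : ℝ} (h₁ : 1 < α) (p q s : ℝ≥0∞) :
    ENNReal.ofReal α * (p * s ^ (α - 1))
      ≤ p ^ α * q ^ (1 - α) + ENNReal.ofReal (α - 1) * (q * s ^ α) := by
  have h₀ : 0 < α := by linarith
  have h₁' : 0 < α - 1 := by linarith
  rcases eq_or_ne q 0 with rfl | hq₀
  · rcases eq_or_ne p 0 with rfl | hp
    · simp
    · rw [zero_rpow_of_neg (sub_neg.2 h₁), mul_top (rpow_pos_of_nonneg hp.bot_lt h₀.le).ne']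
      exact le_top.trans_eq (top_add _).symm
  rcases eq_or_ne q ⊤ with rfl | hq
  · rcases eq_or_ne s 0 with rfl | hs
    · simp [zero_rpow_of_pos h₁']
    · rw [top_mul (rpow_pos_of_nonneg hs.bot_lt h₀.le).ne', mul_top (by simpa using h₁')]
      exact le_top.trans_eq (add_top _).symm
  -- AM–GM with weight `α⁻¹`; `q` cancels in `(p^α q^(1-α))^(1/α) (q s^α)^(1-1/α) = p s^(α-1)`
  have hw₀ : 0 < α⁻¹ := inv_pos.2 h₀
  have hw₁ : α⁻¹ < 1 := inv_lt_one_of_one_lt₀ h₁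
  have hq_cancel : q ^ ((1 - α) * α⁻¹) * q ^ (1 - α⁻¹) = 1 := by
    rw [← rpow_add _ _ hq₀ hq, show (1 - α) * α⁻¹ + (1 - α⁻¹) = 0 by field_simp; ring, rpow_zero]
  have hlhs : (p ^ α * q ^ (1 - α)) ^ α⁻¹ * (q * s ^ α) ^ (1 - α⁻¹) = p * s ^ (α - 1) := by
    rw [mul_rpow_of_nonneg _ _ hw₀.le, mul_rpow_of_nonneg _ _ (sub_pos.2 hw₁).le, ← rpow_mul,
      ← rpow_mul, ← rpow_mul, mul_inv_cancel₀ h₀.ne', rpow_one,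
      show α * (1 - α⁻¹) = α - 1 by field_simp]
    calc p * q ^ ((1 - α) * α⁻¹) * (q ^ (1 - α⁻¹) * s ^ (α - 1))
        = p * s ^ (α - 1) * (q ^ ((1 - α) * α⁻¹) * q ^ (1 - α⁻¹)) := by ring
      _ = p * s ^ (α - 1) := by rw [hq_cancel, mul_one]
  have hamgm := geom_mean_le_arith_mean2_weighted hw₀ hw₁ (p ^ α * q ^ (1 - α)) (q * s ^ α)
  rw [hlhs] at hamgm
  calc ENNReal.ofReal α * (p * s ^ (α - 1))
      ≤ ENNReal.ofReal α * (ENNReal.ofReal α⁻¹ * (p ^ α * q ^ (1 - α))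
          + ENNReal.ofReal (1 - α⁻¹) * (q * s ^ α)) := by gcongr
    _ = p ^ α * q ^ (1 - α) + ENNReal.ofReal (α - 1) * (q * s ^ α) := by
      rw [mul_add, ← mul_assoc, ← mul_assoc (ENNReal.ofReal α), ← ofReal_mul h₀.le,
        ← ofReal_mul h₀.le, mul_inv_cancel₀ h₀.ne', ofReal_one, one_mul, mul_one_sub,
        mul_inv_cancel₀ h₀.ne']

theorem div_rpow_eq_rpow_mul_rpow_neg {a b : ℝ≥0∞} (ha : a ≠ 0) (hb : b ≠ ⊤) (β : ℝ) :
    (a / b) ^ β = a ^ β * b ^ (-β) := by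
  rw [div_eq_mul_inv, mul_rpow_of_ne_zero ha (ENNReal.inv_ne_zero.2 hb), inv_rpow, rpow_neg]

theorem rpow_one_add' {x : ℝ≥0∞} (hx : x ≠ ⊤) {y : ℝ} (hy : 0 < 1 + y) :
    x ^ (1 + y) = x * x ^ y := by
  rw [rpow_add_of_add_pos hx 1 y hy, rpow_one]

theorem mul_div_rpow_sub_one {α : ℝ} (h₁ : 1 < α) (a b : ℝ≥0∞) :
    a * (a / b) ^ (α - 1) = a ^ α * b ^ (1 - α) := by
  have h₀ : 0 < α := by linarith
  have h₁' : 0 < α - 1 := by linarith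
  rcases eq_or_ne a 0 with rfl | ha₀
  · simp [zero_rpow_of_pos h₀]
  rcases eq_or_ne b 0 with rfl | hb₀
  · simp [div_zero ha₀, top_rpow_of_pos h₁', zero_rpow_of_neg (sub_neg.2 h₁), ha₀,
      rpow_eq_zero_iff, h₀.not_gt]
  rcases eq_or_ne b ⊤ with rfl | hb
  · simp [zero_rpow_of_pos h₁', top_rpow_of_neg (sub_neg.2 h₁)]
  rcases eq_or_ne a ⊤ with rfl | ha
  · simp [top_div_of_ne_top hb, top_rpow_of_pos h₁', top_rpow_of_pos h₀, rpow_eq_zero_iff, hb₀,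
      hb]
  rw [div_rpow_eq_rpow_mul_rpow_neg ha₀ hb, ← mul_assoc, ← rpow_one_add' ha (by linarith),
    add_sub_cancel, neg_sub]

theorem mul_div_rpow_sub_one_le {α : ℝ} (h₀ : 0 < α) (h₁ : α < 1) (a b : ℝ≥0∞) :
    a * (a / b) ^ (α - 1) ≤ a ^ α * b ^ (1 - α) := by
  have h₁' : 0 < 1 - α := by linarith
  rcases eq_or_ne a 0 with rfl | ha₀
  · simp [zero_rpow_of_pos h₀]
  rcases eq_or_ne b 0 with rfl | hb₀
  · simp [div_zero ha₀, top_rpow_of_neg (sub_neg.2 h₁)]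
  rcases eq_or_ne a ⊤ with rfl | ha
  · rcases eq_or_ne b ⊤ with rfl | hb
    · simp [top_rpow_of_pos h₀, top_rpow_of_pos h₁']
    · simp [top_div_of_ne_top hb, top_rpow_of_neg (sub_neg.2 h₁)]
  rcases eq_or_ne b ⊤ with rfl | hb
  · simp [top_rpow_of_pos h₁', ha₀, rpow_eq_zero_iff, ha]
  rw [div_rpow_eq_rpow_mul_rpow_neg ha₀ hb, ← mul_assoc, ← rpow_one_add' ha (by linarith),
    add_sub_cancel, neg_sub]

theorem mul_div_rpow_le {α : ℝ} (h₀ : 0 < α) (h₁ : α < 1) (a b : ℝ≥0∞) :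
    b * (a / b) ^ α ≤ a ^ α * b ^ (1 - α) := by
  rcases eq_or_ne a 0 with rfl | ha₀
  · simp [zero_rpow_of_pos h₀]
  rcases eq_or_ne b ⊤ with rfl | hb
  · simp [zero_rpow_of_pos h₀]
  rw [div_rpow_eq_rpow_mul_rpow_neg ha₀ hb, mul_left_comm, ← rpow_one_add' hb (by linarith),
    ← sub_eq_add_neg]

theorem mul_rpow_le_mul_rpow_sub_one {α : ℝ} (h₀ : 0 < α) {a b g : ℝ≥0∞} (hg : g ≤ a / b)
    (hg_top : g ≠ ⊤) : b * g ^ α ≤ a * g ^ (α - 1) :=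
  calc b * g ^ α = b * g * g ^ (α - 1) := by
        rw [mul_assoc, ← rpow_one_add' hg_top (by linarith), add_sub_cancel]
    _ ≤ a * g ^ (α - 1) := by
        gcongr
        calc b * g ≤ b * (a / b) := by gcongr
          _ ≤ a := mul_div_le

end ENNReal

section Hellinger

variable {X : Type*} [MeasurableSpace X] (P Q : Measure X) {α : ℝ}

noncomputable def likelihoodRatio (x : X) : ℝ≥0∞ :=
  P.rnDeriv (P + Q) x / Q.rnDeriv (P + Q) x

theorem measurable_likelihoodRatio : Measurable (likelihoodRatio P Q) :=
  (Measure.measurable_rnDeriv _ _).div (Measure.measurable_rnDeriv _ _)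

variable [SigmaFinite P] [SigmaFinite Q]

theorem lintegral_rnDeriv_add_left_mul {f : X → ℝ≥0∞} (hf : Measurable f) :
    ∫⁻ x, P.rnDeriv (P + Q) x * f x ∂(P + Q) = ∫⁻ x, f x ∂P :=
  lintegral_rnDeriv_mul (Measure.AbsolutelyContinuous.rfl.add_right Q) hf.aemeasurable

theorem lintegral_rnDeriv_add_right_mul {f : X → ℝ≥0∞} (hf : Measurable f) :
    ∫⁻ x, Q.rnDeriv (P + Q) x * f x ∂(P + Q) = ∫⁻ x, f x ∂Q :=
  lintegral_rnDeriv_mul (Measure.AbsolutelyContinuous.rfl.add_right' P) hf.aemeasurable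

theorem hellingerInt_le_of_lt_one (h₀ : 0 < α) (h₁ : α < 1) {t : X → ℝ≥0∞} (ht : Measurable t) :
    hellingerInt α P Q
      ≤ ENNReal.ofReal α * ∫⁻ x, t x ^ (α - 1) ∂P
        + ENNReal.ofReal (1 - α) * ∫⁻ x, t x ^ α ∂Q := by
  have hp := Measure.measurable_rnDeriv P (P + Q)
  have hq := Measure.measurable_rnDeriv Q (P + Q)
  calc hellingerInt α P Q
      ≤ ∫⁻ x, (ENNReal.ofReal α * (P.rnDeriv (P + Q) x * t x ^ (α - 1))
          + ENNReal.ofReal (1 - α) * (Q.rnDeriv (P + Q) x * t x ^ α)) ∂(P + Q) :=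
        lintegral_mono fun x => ENNReal.rpow_mul_rpow_le_of_lt_one h₀ h₁ _ _ _
    _ = _ := by
        rw [lintegral_add_left (by fun_prop), lintegral_const_mul _ (by fun_prop),
          lintegral_const_mul _ (by fun_prop), lintegral_rnDeriv_add_left_mul P Q (by fun_prop),
          lintegral_rnDeriv_add_right_mul P Q (by fun_prop)]

theorem mul_lintegral_rpow_sub_one_le_of_one_lt (h₁ : 1 < α) {s : X → ℝ≥0∞} (hs : Measurable s) :
    ENNReal.ofReal α * ∫⁻ x, s x ^ (α - 1) ∂P
      ≤ hellingerInt α P Q + ENNReal.ofReal (α - 1) * ∫⁻ x, s x ^ α ∂Q := by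
  have hp := Measure.measurable_rnDeriv P (P + Q)
  have hq := Measure.measurable_rnDeriv Q (P + Q)
  calc ENNReal.ofReal α * ∫⁻ x, s x ^ (α - 1) ∂P
      = ∫⁻ x, ENNReal.ofReal α * (P.rnDeriv (P + Q) x * s x ^ (α - 1)) ∂(P + Q) := by
        rw [lintegral_const_mul _ (by fun_prop), lintegral_rnDeriv_add_left_mul P Q (by fun_prop)]
    _ ≤ ∫⁻ x, (P.rnDeriv (P + Q) x ^ α * Q.rnDeriv (P + Q) x ^ (1 - α)
          + ENNReal.ofReal (α - 1) * (Q.rnDeriv (P + Q) x * s x ^ α)) ∂(P + Q) :=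
        lintegral_mono fun x => ENNReal.mul_rpow_sub_one_le_of_one_lt h₁ _ _ _
    _ = _ := by
        rw [lintegral_add_right _ (by fun_prop), lintegral_const_mul _ (by fun_prop),
          lintegral_rnDeriv_add_right_mul P Q (by fun_prop)]
        rfl

theorem lintegral_likelihoodRatio_rpow_sub_one_le (h₀ : 0 < α) (h₁ : α < 1) :
    ∫⁻ x, likelihoodRatio P Q x ^ (α - 1) ∂P ≤ hellingerInt α P Q := by
  rw [← lintegral_rnDeriv_add_left_mul P Q ((measurable_likelihoodRatio P Q).pow_const _)]
  exact lintegral_mono fun x => ENNReal.mul_div_rpow_sub_one_le h₀ h₁ _ _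

theorem lintegral_likelihoodRatio_rpow_le (h₀ : 0 < α) (h₁ : α < 1) :
    ∫⁻ x, likelihoodRatio P Q x ^ α ∂Q ≤ hellingerInt α P Q := by
  rw [← lintegral_rnDeriv_add_right_mul P Q ((measurable_likelihoodRatio P Q).pow_const _)]
  exact lintegral_mono fun x => ENNReal.mul_div_rpow_le h₀ h₁ _ _

theorem hellingerInt_eq_lintegral_likelihoodRatio_rpow (h₁ : 1 < α) :
    hellingerInt α P Q = ∫⁻ x, likelihoodRatio P Q x ^ (α - 1) ∂P := by
  rw [← lintegral_rnDeriv_add_left_mul P Q ((measurable_likelihoodRatio P Q).pow_const _)]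
  exact lintegral_congr fun x => (ENNReal.mul_div_rpow_sub_one h₁ _ _).symm

theorem lintegral_rpow_le_lintegral_rpow_sub_one (h₀ : 0 < α) {g : X → ℝ≥0∞} (hg : Measurable g)
    (hg_le : g ≤ likelihoodRatio P Q) (hg_top : ∀ x, g x ≠ ⊤) :
    ∫⁻ x, g x ^ α ∂Q ≤ ∫⁻ x, g x ^ (α - 1) ∂P := by
  rw [← lintegral_rnDeriv_add_right_mul P Q (hg.pow_const _),
    ← lintegral_rnDeriv_add_left_mul P Q (hg.pow_const _)]
  exact lintegral_mono fun x => ENNReal.mul_rpow_le_mul_rpow_sub_one h₀ (hg_le x) (hg_top x)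

theorem lintegral_rpow_sub_one_le_hellingerInt (h₁ : 1 < α) {s : X → ℝ≥0∞} (hs : Measurable s)
    (hs_fin : ∫⁻ x, s x ^ (α - 1) ∂P ≠ ⊤)
    (hs_le : ∫⁻ x, s x ^ α ∂Q ≤ ∫⁻ x, s x ^ (α - 1) ∂P) :
    ∫⁻ x, s x ^ (α - 1) ∂P ≤ hellingerInt α P Q := by
  set B := ∫⁻ x, s x ^ (α - 1) ∂P
  have hα : ENNReal.ofReal α = ENNReal.ofReal (α - 1) + 1 := by
    rw [← ENNReal.ofReal_one, ← ENNReal.ofReal_add (by linarith) zero_le_one, sub_add_cancel]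
  have h : ENNReal.ofReal α * B ≤ hellingerInt α P Q + ENNReal.ofReal (α - 1) * B := by
    grw [mul_lintegral_rpow_sub_one_le_of_one_lt P Q h₁ hs, hs_le]
  rw [hα, add_mul, one_mul, add_comm (hellingerInt α P Q)] at h
  exact (ENNReal.add_le_add_iff_left (ENNReal.mul_ne_top ENNReal.ofReal_ne_top hs_fin)).1 h

end Hellinger

section Trim

variable {X : Type*} {m mX : MeasurableSpace X} (P Q : Measure[mX] X) [IsFiniteMeasure P]
  [IsFiniteMeasure Q] (hm : m ≤ mX) {α : ℝ}

theorem hellingerInt_le_hellingerInt_trim (h₀ : 0 < α) (h₁ : α < 1) :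
    hellingerInt α P Q ≤ @hellingerInt X m α (P.trim hm) (Q.trim hm) := by
  set t := @likelihoodRatio X m (P.trim hm) (Q.trim hm)
  have ht : Measurable[m] t := @measurable_likelihoodRatio X m _ _
  calc hellingerInt α P Q
      ≤ ENNReal.ofReal α * ∫⁻ x, t x ^ (α - 1) ∂P
        + ENNReal.ofReal (1 - α) * ∫⁻ x, t x ^ α ∂Q :=
        hellingerInt_le_of_lt_one P Q h₀ h₁ (ht.mono hm le_rfl)
    _ = ENNReal.ofReal α * ∫⁻ x, t x ^ (α - 1) ∂(P.trim hm)
        + ENNReal.ofReal (1 - α) * ∫⁻ x, t x ^ α ∂(Q.trim hm) := by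
        rw [lintegral_trim hm (ht.pow_const _), lintegral_trim hm (ht.pow_const _)]
    _ ≤ ENNReal.ofReal α * @hellingerInt X m α (P.trim hm) (Q.trim hm)
        + ENNReal.ofReal (1 - α) * @hellingerInt X m α (P.trim hm) (Q.trim hm) := by
        gcongr
        · exact @lintegral_likelihoodRatio_rpow_sub_one_le X m _ _ _ _ _ h₀ h₁
        · exact @lintegral_likelihoodRatio_rpow_le X m _ _ _ _ _ h₀ h₁
    _ = @hellingerInt X m α (P.trim hm) (Q.trim hm) := by
        rw [← add_mul, ← ENNReal.ofReal_add h₀.le (by linarith), add_sub_cancel,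
          ENNReal.ofReal_one, one_mul]

theorem hellingerInt_trim_le (h₁ : 1 < α) :
    @hellingerInt X m α (P.trim hm) (Q.trim hm) ≤ hellingerInt α P Q := by
  have h₁' : 0 < α - 1 := by linarith
  set t := @likelihoodRatio X m (P.trim hm) (Q.trim hm)
  have ht : Measurable[m] t := @measurable_likelihoodRatio X m _ _
  -- truncating `t` at level `n` makes the integrals finite, as needed to cancel terms
  set g : ℕ → X → ℝ≥0∞ := fun n x => min (t x) n
  have hg : ∀ n, Measurable[m] (g n) := fun n => ht.min measurable_const
  have hg_top : ∀ n x, g n x ≠ ⊤ := fun n x => (min_le_right _ _).trans_lt (by simp) |>.ne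
  have hlim : Tendsto (fun n => ∫⁻ x, g n x ^ (α - 1) ∂(P.trim hm)) atTop
      (𝓝 (@hellingerInt X m α (P.trim hm) (Q.trim hm))) := by
    rw [@hellingerInt_eq_lintegral_likelihoodRatio_rpow X m _ _ _ _ _ h₁]
    refine lintegral_tendsto_of_tendsto_of_monotone (fun n => ((hg n).pow_const _).aemeasurable)
      (ae_of_all _ fun x i j hij => ?_) (ae_of_all _ fun x => ?_)
    · exact ENNReal.rpow_le_rpow (min_le_min_left _ (by exact_mod_cast hij)) h₁'.le
    · have := tendsto_const_nhds (x := t x).min ENNReal.tendsto_nat_nhds_top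
      rw [min_top_right] at this
      exact (ENNReal.continuous_rpow_const.tendsto _).comp this
  refine le_of_tendsto' hlim fun n => ?_
  have hg_trim : ∀ β : ℝ, ∀ μ : Measure[mX] X,
      ∫⁻ x, g n x ^ β ∂(μ.trim hm) = ∫⁻ x, g n x ^ β ∂μ :=
    fun β μ => lintegral_trim hm ((hg n).pow_const β)
  rw [hg_trim]
  refine lintegral_rpow_sub_one_le_hellingerInt P Q h₁ ((hg n).mono hm le_rfl) ?_ ?_
  · refine ne_top_of_le_ne_top ?_ (lintegral_mono fun x => ENNReal.rpow_le_rpow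
      (min_le_right (t x) n) h₁'.le)
    rw [lintegral_const]
    exact ENNReal.mul_ne_top (ENNReal.rpow_ne_top_of_nonneg h₁'.le (ENNReal.natCast_ne_top n))
      (measure_ne_top _ _)
  · rw [← hg_trim, ← hg_trim]
    exact @lintegral_rpow_le_lintegral_rpow_sub_one X m _ _ _ _ _ (by linarith) _ (hg n)
      (fun x => min_le_left _ _) (hg_top n)

end Trim

theorem renyiSimple_trim_le {X : Type*} {m mX : MeasurableSpace X} (P Q : Measure[mX] X)
    [IsFiniteMeasure P] [IsFiniteMeasure Q] (hm : m ≤ mX) {α : ℝ} (h₀ : 0 < α) (h₁ : α ≠ 1) :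
    @renyiSimple X m α (P.trim hm) (Q.trim hm) ≤ renyiSimple α P Q := by
  unfold renyiSimple
  rcases h₁.lt_or_gt with h₁ | h₁
  · rw [mul_comm, mul_comm (((α - 1)⁻¹ : ℝ) : EReal)]
    refine EReal.mul_le_mul_of_nonpos_right ?_ (by exact_mod_cast inv_nonpos.2 (by linarith))
    exact ENNReal.log_monotone (hellingerInt_le_hellingerInt_trim P Q hm h₀ h₁)
  · refine mul_le_mul_of_nonneg_left ?_ (by exact_mod_cast inv_nonneg.2 (by linarith))
    exact ENNReal.log_monotone (hellingerInt_trim_le P Q hm h₁)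

/-- **Data processing inequality.** For any order `α ∈ [0,∞]` and any sub-σ-algebra
`m` of the σ-algebra on `X`, restricting `P` and `Q` to `m` can only decrease the
Rényi divergence: `D_α(P|m ‖ Q|m) ≤ D_α(P‖Q)`. -/
theorem renyiDiv_data_processing
    {X : Type*} {mX : MeasurableSpace X} (P Q : Measure X)
    [IsProbabilityMeasure P] [IsProbabilityMeasure Q]
    {m : MeasurableSpace X} (hm : m ≤ mX) (α : ℝ≥0∞) :
    @renyiDiv X m α (@Measure.trim X m mX P hm) (@Measure.trim X m mX Q hm)
      ≤ @renyiDiv X mX α P Q := by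
  unfold renyiDiv
  split_ifs with h0 h1 htop
  · refine limsup_le_limsup ?_
    filter_upwards [Ioo_mem_nhdsGT one_pos] with a ha
    exact renyiSimple_trim_le P Q hm ha.1 ha.2.ne
  · refine limsup_le_limsup ?_
    filter_upwards [Ioo_mem_nhdsLT one_pos] with a ha
    exact renyiSimple_trim_le P Q hm ha.1 ha.2.ne
  · refine limsup_le_limsup ?_
    filter_upwards [eventually_gt_atTop 1] with a ha
    exact renyiSimple_trim_le P Q hm (by linarith) ha.ne'
  · exact renyiSimple_trim_le P Q hm (ENNReal.toReal_pos h0 htop)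
      (mt (ENNReal.toReal_eq_one_iff α).1 h1)
end

section
/- For any orders 0 < α ≤ β < 1 and any probability measures P, Q on a measurable space, (α/β)·((1−β)/(1−α))·D_β(P‖Q) ≤ D_α(P‖Q) ≤ D_β(P‖Q). Consequently, for orders in (0,1), the Rényi divergences of distinct orders are all within constant multiplicative factors of each other. -/
open MeasureTheory Real Filter Set
open scoped ENNReal NNReal Topology Classical

/-!
By Hölder's inequality the Hellinger integral `H_s = ∫ p^s q^(1-s) dμ` is log-convex in
`s ∈ [0,1]`, and `H_0 = H_1 = 1` for probability measures. Writing `α` as a convex combination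
of `0` and `β`, and `β` as one of `α` and `1`, gives `log H_α ≤ (α/β) log H_β` and
`log H_β ≤ ((1-β)/(1-α)) log H_α`; multiplying by the negative numbers `(α-1)⁻¹`, `(β-1)⁻¹`
turns these into the two bounds.
-/

lemma ENNReal.rpow_mul_rpow_convexComb (x y : ℝ≥0∞) {a b θ : ℝ}
    (ha₀ : 0 ≤ a) (ha₁ : a ≤ 1) (hb₀ : 0 ≤ b) (hb₁ : b ≤ 1) (hθ₀ : 0 ≤ θ) (hθ₁ : θ ≤ 1) :
    x ^ (θ * a + (1 - θ) * b) * y ^ (1 - (θ * a + (1 - θ) * b))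
      = (x ^ a * y ^ (1 - a)) ^ θ * (x ^ b * y ^ (1 - b)) ^ (1 - θ) := by
  have hθ₁' : 0 ≤ 1 - θ := by linarith
  rw [ENNReal.mul_rpow_of_nonneg _ _ hθ₀, ENNReal.mul_rpow_of_nonneg _ _ hθ₁',
    ← ENNReal.rpow_mul, ← ENNReal.rpow_mul, ← ENNReal.rpow_mul, ← ENNReal.rpow_mul,
    mul_mul_mul_comm, ← ENNReal.rpow_add_of_nonneg _ _ (by positivity) (by positivity),
    ← ENNReal.rpow_add_of_nonneg _ _ (by nlinarith) (by nlinarith)]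
  ring_nf

lemma EReal.coe_mul_le_coe_mul_of_nonpos {c : ℝ} (hc : c ≤ 0) {x y : EReal} (h : x ≤ y) :
    (c : EReal) * y ≤ c * x := by
  rw [mul_comm (c : EReal), mul_comm (c : EReal)]
  exact EReal.mul_le_mul_of_nonpos_right h (EReal.coe_nonpos.2 hc)

section Hellinger

variable {X : Type*} [MeasurableSpace X]

lemma hellingerInt_convexComb_le (P Q : Measure X) {a b θ : ℝ}
    (ha₀ : 0 ≤ a) (ha₁ : a ≤ 1) (hb₀ : 0 ≤ b) (hb₁ : b ≤ 1) (hθ₀ : 0 ≤ θ) (hθ₁ : θ ≤ 1) :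
    hellingerInt (θ * a + (1 - θ) * b) P Q
      ≤ hellingerInt a P Q ^ θ * hellingerInt b P Q ^ (1 - θ) := by
  have hp := (P.measurable_rnDeriv (P + Q)).aemeasurable (μ := P + Q)
  have hq := (Q.measurable_rnDeriv (P + Q)).aemeasurable (μ := P + Q)
  unfold hellingerInt
  simp_rw [ENNReal.rpow_mul_rpow_convexComb _ _ ha₀ ha₁ hb₀ hb₁ hθ₀ hθ₁]
  exact ENNReal.lintegral_mul_norm_pow_le
    ((hp.pow_const a).mul (hq.pow_const _)) ((hp.pow_const b).mul (hq.pow_const _))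
    hθ₀ (by linarith) (by ring)

lemma hellingerInt_zero (P Q : Measure X) [SigmaFinite P] [SigmaFinite Q] :
    hellingerInt 0 P Q = Q univ := by
  simp only [hellingerInt, ENNReal.rpow_zero, sub_zero, ENNReal.rpow_one, one_mul]
  exact Measure.lintegral_rnDeriv ((le_refl Q).absolutelyContinuous.add_right' P)

lemma hellingerInt_one (P Q : Measure X) [SigmaFinite P] [SigmaFinite Q] :
    hellingerInt 1 P Q = P univ := by
  simp only [hellingerInt, ENNReal.rpow_one, sub_self, ENNReal.rpow_zero, mul_one]
  exact Measure.lintegral_rnDeriv (Measure.AbsolutelyContinuous.rfl.add_right Q)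

end Hellinger

section ProbabilityMeasure

variable {X : Type*} [MeasurableSpace X] (P Q : Measure X)
  [IsProbabilityMeasure P] [IsProbabilityMeasure Q]

lemma hellingerInt_le_rpow_div {α β : ℝ} (hα : 0 < α) (hαβ : α ≤ β) (hβ : β ≤ 1) :
    hellingerInt α P Q ≤ hellingerInt β P Q ^ (α / β) := by
  have hβ₀ : 0 < β := hα.trans_le hαβ
  have h := hellingerInt_convexComb_le P Q hβ₀.le hβ le_rfl zero_le_one
    (div_nonneg hα.le hβ₀.le) ((div_le_one hβ₀).2 hαβ)
  rwa [mul_zero, add_zero, div_mul_cancel₀ _ hβ₀.ne', hellingerInt_zero, measure_univ,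
    ENNReal.one_rpow, mul_one] at h

lemma hellingerInt_le_rpow_one_sub_div {α β : ℝ} (hα : 0 ≤ α) (hαβ : α ≤ β) (hβ : β < 1) :
    hellingerInt β P Q ≤ hellingerInt α P Q ^ ((1 - β) / (1 - α)) := by
  have hα₁ : 0 < 1 - α := by linarith
  have h := hellingerInt_convexComb_le P Q (θ := (1 - β) / (1 - α)) hα (by linarith)
    zero_le_one le_rfl (div_nonneg (by linarith) hα₁.le)
    ((div_le_one hα₁).2 (by linarith))
  have hcomb : (1 - β) / (1 - α) * α + (1 - (1 - β) / (1 - α)) * 1 = β := by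
    field_simp; ring
  rwa [hcomb, hellingerInt_one, measure_univ, ENNReal.one_rpow, mul_one] at h

end ProbabilityMeasure

/-- **All orders in `(0,1)` are equivalent.** For `0 < α ≤ β < 1`,
`(α/β)·((1-β)/(1-α))·D_β(P‖Q) ≤ D_α(P‖Q) ≤ D_β(P‖Q)`. -/
theorem renyiDiv_orders_equivalent
    {X : Type*} [MeasurableSpace X] (P Q : Measure X)
    [IsProbabilityMeasure P] [IsProbabilityMeasure Q]
    (α β : ℝ) (hα : 0 < α) (hαβ : α ≤ β) (hβ : β < 1) :
    ((α / β * ((1 - β) / (1 - α)) : ℝ) : EReal) * renyiSimple β P Q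
        ≤ renyiSimple α P Q ∧
    renyiSimple α P Q ≤ renyiSimple β P Q := by
  have hβ₀ : 0 < β := hα.trans_le hαβ
  have hlogα : ENNReal.log (hellingerInt α P Q)
      ≤ ((α / β : ℝ) : EReal) * ENNReal.log (hellingerInt β P Q) := by
    rw [← ENNReal.log_rpow]
    exact ENNReal.log_monotone (hellingerInt_le_rpow_div P Q hα hαβ hβ.le)
  have hlogβ : ENNReal.log (hellingerInt β P Q)
      ≤ (((1 - β) / (1 - α) : ℝ) : EReal) * ENNReal.log (hellingerInt α P Q) := by
    rw [← ENNReal.log_rpow]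
    exact ENNReal.log_monotone (hellingerInt_le_rpow_one_sub_div P Q hα.le hαβ hβ)
  have hα₁ : 1 - α ≠ 0 := by linarith
  have hβ₁ : 1 - β ≠ 0 := by linarith
  constructor
  · calc ((α / β * ((1 - β) / (1 - α)) : ℝ) : EReal) * renyiSimple β P Q
        = (((α - 1)⁻¹ : ℝ) : EReal) * ((α / β : ℝ) * ENNReal.log (hellingerInt β P Q)) := by
          rw [renyiSimple, ← mul_assoc, ← mul_assoc, ← EReal.coe_mul, ← EReal.coe_mul]
          congr 2
          rw [← neg_sub 1 α, ← neg_sub 1 β]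
          field_simp
      _ ≤ renyiSimple α P Q :=
          EReal.coe_mul_le_coe_mul_of_nonpos (inv_nonpos.2 (by linarith)) hlogα
  · calc renyiSimple α P Q
        = (((β - 1)⁻¹ : ℝ) : EReal)
            * (((1 - β) / (1 - α) : ℝ) * ENNReal.log (hellingerInt α P Q)) := by
          rw [renyiSimple, ← mul_assoc, ← EReal.coe_mul]
          congr 2
          rw [← neg_sub 1 α, ← neg_sub 1 β]
          field_simp
      _ ≤ renyiSimple β P Q :=
          EReal.coe_mul_le_coe_mul_of_nonpos (inv_nonpos.2 (by linarith)) hlogβ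
end

section
/- Let α ∈ (0,1). For all probability measures P₁, Q₁, P₂, Q₂ on a measurable space (X, 𝓐) dominated by a common σ-finite measure μ, and every ε > 0, the Hellinger integrals satisfy |∫ p₁^α q₁^{1−α} dμ − ∫ p₂^α q₂^{1−α} dμ| ≤ ε^α + ε^{α−1}·V(P₁,P₂) + ε^{1−α} + ε^{−α}·V(Q₁,Q₂), where V denotes total variation distance. Consequently, the map (P,Q) ↦ D_α(P‖Q) (with values in [0,∞]) is uniformly continuous with respect to the total variation distance on pairs. -/
open MeasureTheory Real Filter Set
open scoped ENNReal NNReal Topology Classical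

/-- The total variation distance `V(P,Q) = ∫ |p - q| dμ`, computed with the dominating
measure `μ = P + Q` (the value does not depend on the choice of dominating measure);
`|p - q|` is expressed in `ℝ≥0∞` as `(p - q) + (q - p)` with truncated subtraction. -/
noncomputable def tvDist {X : Type*} [MeasurableSpace X] (P Q : Measure X) : ℝ≥0∞ :=
  ∫⁻ x, (P.rnDeriv (P + Q) x - Q.rnDeriv (P + Q) x)
      + (Q.rnDeriv (P + Q) x - P.rnDeriv (P + Q) x) ∂(P + Q)


/-!
Subadditivity of `t ↦ t^α` and `t ↦ t^(1-α)`, together with the weighted bound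
`x^α y^(1-α) ≤ e^α y + e^(α-1) x` (compare `x` with `e y`), gives pointwise
`a₁^α b₁^(1-α) ≤ a₂^α b₂^(1-α) + e^α b₁ + e^(α-1) (a₁ - a₂) + e^(1-α) a₂ + e^(-α) (b₁ - b₂)`;
integrating, with `∫ q₁ ≤ 1` and `∫ p₂ ≤ 1`, yields the Hellinger estimate. Both the Hellinger
integral and the total variation are integrals of a positively homogeneous function of the
densities, so they may be computed against any common dominating measure. Taking `δ = e`, the
error term is at most `2 (e^α + e^(1-α))`, which tends to `0` with `e`. Finally,
`H ↦ (α - 1)⁻¹ log H` is at least `ε⁻¹` for `H ≤ exp ((α - 1) / ε)` and uniformly continuous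
above half that threshold.
-/

noncomputable def hellingerTVBound (α : ℝ) (e V W : ℝ≥0∞) : ℝ≥0∞ :=
  e ^ α + e ^ (α - 1) * V + e ^ (1 - α) + e ^ (-α) * W

section Pointwise

variable {α : ℝ}

lemma ENNReal.rpow_mul_rpow_one_sub (h0 : 0 ≤ α) (h1 : α ≤ 1) (y : ℝ≥0∞) :
    y ^ α * y ^ (1 - α) = y := by
  rw [← ENNReal.rpow_add_of_nonneg _ _ h0 (by linarith), add_sub_cancel, ENNReal.rpow_one]

lemma ENNReal.rpow_mul_rpow_one_sub_le (h0 : 0 ≤ α) (h1 : α ≤ 1) {e : ℝ≥0∞} (he0 : e ≠ 0)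
    (he : e ≠ ∞) (x y : ℝ≥0∞) : x ^ α * y ^ (1 - α) ≤ e ^ α * y + e ^ (α - 1) * x := by
  rcases le_total x (e * y) with h | h
  · calc x ^ α * y ^ (1 - α) ≤ (e * y) ^ α * y ^ (1 - α) := by gcongr
      _ = e ^ α * y := by
        rw [ENNReal.mul_rpow_of_nonneg _ _ h0, mul_assoc, ENNReal.rpow_mul_rpow_one_sub h0 h1]
      _ ≤ _ := le_self_add
  · have hy : y ≤ e⁻¹ * x := by
      rw [← ENNReal.inv_mul_cancel_left he0 he (b := y)]; gcongr
    calc x ^ α * y ^ (1 - α) ≤ x ^ α * (e⁻¹ * x) ^ (1 - α) := by gcongr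
      _ = e ^ (α - 1) * x := by
        rw [ENNReal.mul_rpow_of_nonneg _ _ (by linarith), ENNReal.inv_rpow, ← ENNReal.rpow_neg,
          neg_sub, mul_left_comm, ENNReal.rpow_mul_rpow_one_sub h0 h1]
      _ ≤ _ := le_add_self

lemma ENNReal.rpow_le_rpow_add_rpow_tsub {p : ℝ} (h0 : 0 ≤ p) (h1 : p ≤ 1) (a b : ℝ≥0∞) :
    a ^ p ≤ b ^ p + (a - b) ^ p :=
  (ENNReal.rpow_le_rpow le_add_tsub h0).trans (ENNReal.rpow_add_le_add_rpow _ _ h0 h1)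

lemma ENNReal.rpow_mul_rpow_one_sub_le_add (h0 : 0 ≤ α) (h1 : α ≤ 1) {e : ℝ≥0∞} (he0 : e ≠ 0)
    (he : e ≠ ∞) (a₁ b₁ a₂ b₂ : ℝ≥0∞) :
    a₁ ^ α * b₁ ^ (1 - α) ≤ a₂ ^ α * b₂ ^ (1 - α)
      + (e ^ α * b₁ + e ^ (α - 1) * (a₁ - a₂) + e ^ (1 - α) * a₂ + e ^ (-α) * (b₁ - b₂)) := by
  have h1' : 0 ≤ 1 - α := by linarith
  have hab : (a₁ - a₂) ^ α * b₁ ^ (1 - α) ≤ e ^ α * b₁ + e ^ (α - 1) * (a₁ - a₂) :=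
    ENNReal.rpow_mul_rpow_one_sub_le h0 h1 he0 he _ _
  have hba : (b₁ - b₂) ^ (1 - α) * a₂ ^ α ≤ e ^ (1 - α) * a₂ + e ^ (-α) * (b₁ - b₂) := by
    have := ENNReal.rpow_mul_rpow_one_sub_le h1' (by linarith) he0 he (b₁ - b₂) a₂
    convert this using 4 <;> ring
  calc a₁ ^ α * b₁ ^ (1 - α)
      ≤ (a₂ ^ α + (a₁ - a₂) ^ α) * b₁ ^ (1 - α) := by
        gcongr; exact ENNReal.rpow_le_rpow_add_rpow_tsub h0 h1 _ _
    _ = a₂ ^ α * b₁ ^ (1 - α) + (a₁ - a₂) ^ α * b₁ ^ (1 - α) := add_mul _ _ _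
    _ ≤ a₂ ^ α * (b₂ ^ (1 - α) + (b₁ - b₂) ^ (1 - α)) + (a₁ - a₂) ^ α * b₁ ^ (1 - α) := by
        gcongr; exact ENNReal.rpow_le_rpow_add_rpow_tsub h1' (by linarith) _ _
    _ = a₂ ^ α * b₂ ^ (1 - α)
        + ((a₁ - a₂) ^ α * b₁ ^ (1 - α) + (b₁ - b₂) ^ (1 - α) * a₂ ^ α) := by ring
    _ ≤ _ := by
        rw [add_assoc (_ + _)]
        exact add_le_add_right ((add_le_add hab hba).trans_eq (by ring)) _

end Pointwise

lemma tsub_add_tsub_le_of_le_add {M : Type*} [AddCommMonoid M] [LinearOrder M]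
    [CanonicallyOrderedAdd M] [Sub M] [OrderedSub M] {a b c : M}
    (hab : a ≤ b + c) (hba : b ≤ a + c) : (a - b) + (b - a) ≤ c := by
  rcases le_total a b with h | h
  · rwa [tsub_eq_zero_of_le h, zero_add, tsub_le_iff_left]
  · rwa [tsub_eq_zero_of_le h, add_zero, tsub_le_iff_left]

section Integral

variable {X : Type*} [MeasurableSpace X] {μ : Measure X} {α : ℝ} {p₁ q₁ p₂ q₂ : X → ℝ≥0∞}

lemma lintegral_rpow_mul_rpow_le_add_hellingerTVBound (h0 : 0 ≤ α) (h1 : α ≤ 1)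
    (hp₁ : Measurable p₁) (hq₁ : Measurable q₁) (hp₂ : Measurable p₂) (hq₂ : Measurable q₂)
    (hq₁_le : ∫⁻ x, q₁ x ∂μ ≤ 1) (hp₂_le : ∫⁻ x, p₂ x ∂μ ≤ 1) {e : ℝ≥0∞} (he0 : e ≠ 0)
    (he : e ≠ ∞) :
    ∫⁻ x, p₁ x ^ α * q₁ x ^ (1 - α) ∂μ ≤ ∫⁻ x, p₂ x ^ α * q₂ x ^ (1 - α) ∂μ
      + hellingerTVBound α e (∫⁻ x, (p₁ x - p₂ x) + (p₂ x - p₁ x) ∂μ)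
          (∫⁻ x, (q₁ x - q₂ x) + (q₂ x - q₁ x) ∂μ) := by
  calc ∫⁻ x, p₁ x ^ α * q₁ x ^ (1 - α) ∂μ
      ≤ ∫⁻ x, p₂ x ^ α * q₂ x ^ (1 - α) + (e ^ α * q₁ x + e ^ (α - 1) * (p₁ x - p₂ x)
          + e ^ (1 - α) * p₂ x + e ^ (-α) * (q₁ x - q₂ x)) ∂μ :=
        lintegral_mono fun x => ENNReal.rpow_mul_rpow_one_sub_le_add h0 h1 he0 he _ _ _ _
    _ = ∫⁻ x, p₂ x ^ α * q₂ x ^ (1 - α) ∂μ + (e ^ α * ∫⁻ x, q₁ x ∂μ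
          + e ^ (α - 1) * ∫⁻ x, p₁ x - p₂ x ∂μ + e ^ (1 - α) * ∫⁻ x, p₂ x ∂μ
          + e ^ (-α) * ∫⁻ x, q₁ x - q₂ x ∂μ) := by
        rw [lintegral_add_left (by fun_prop), lintegral_add_right _ (by fun_prop),
          lintegral_add_right _ (by fun_prop), lintegral_add_right _ (by fun_prop),
          lintegral_const_mul _ hq₁, lintegral_const_mul _ (by fun_prop),
          lintegral_const_mul _ hp₂, lintegral_const_mul _ (by fun_prop)]
    _ ≤ _ := by
        unfold hellingerTVBound
        gcongr _ + (?_ + _ * ?_ + ?_ + _ * ?_)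
        · exact mul_le_of_le_one_right' hq₁_le
        · exact lintegral_mono fun _ => le_self_add
        · exact mul_le_of_le_one_right' hp₂_le
        · exact lintegral_mono fun _ => le_self_add

lemma lintegral_rpow_mul_rpow_tsub_add_tsub_le (h0 : 0 ≤ α) (h1 : α ≤ 1)
    (hp₁ : Measurable p₁) (hq₁ : Measurable q₁) (hp₂ : Measurable p₂) (hq₂ : Measurable q₂)
    (hp₁_le : ∫⁻ x, p₁ x ∂μ ≤ 1) (hq₁_le : ∫⁻ x, q₁ x ∂μ ≤ 1) (hp₂_le : ∫⁻ x, p₂ x ∂μ ≤ 1)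
    (hq₂_le : ∫⁻ x, q₂ x ∂μ ≤ 1) {e : ℝ≥0∞} (he0 : e ≠ 0) (he : e ≠ ∞) :
    (∫⁻ x, p₁ x ^ α * q₁ x ^ (1 - α) ∂μ - ∫⁻ x, p₂ x ^ α * q₂ x ^ (1 - α) ∂μ)
      + (∫⁻ x, p₂ x ^ α * q₂ x ^ (1 - α) ∂μ - ∫⁻ x, p₁ x ^ α * q₁ x ^ (1 - α) ∂μ)
      ≤ hellingerTVBound α e (∫⁻ x, (p₁ x - p₂ x) + (p₂ x - p₁ x) ∂μ)
          (∫⁻ x, (q₁ x - q₂ x) + (q₂ x - q₁ x) ∂μ) := by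
  refine tsub_add_tsub_le_of_le_add (lintegral_rpow_mul_rpow_le_add_hellingerTVBound h0 h1
    hp₁ hq₁ hp₂ hq₂ hq₁_le hp₂_le he0 he) ?_
  have := lintegral_rpow_mul_rpow_le_add_hellingerTVBound h0 h1 hp₂ hq₂ hp₁ hq₁ hq₂_le hp₁_le he0 he
  rwa [lintegral_congr fun x => add_comm (p₂ x - p₁ x) _,
    lintegral_congr fun x => add_comm (q₂ x - q₁ x) _] at this

end Integral

section DominatingMeasure

variable {X : Type*} [MeasurableSpace X] {μ P Q : Measure X}

-- Chain rule `dP/dμ = dP/d(P+Q) · d(P+Q)/dμ`, then homogeneity of `φ`.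
lemma lintegral_rnDeriv_add_eq_lintegral_rnDeriv {φ : ℝ≥0∞ → ℝ≥0∞ → ℝ≥0∞}
    (hφ : Measurable (Function.uncurry φ))
    (hφ_mul : ∀ c a b, c ≠ ∞ → φ (c * a) (c * b) = c * φ a b)
    [IsFiniteMeasure P] [IsFiniteMeasure Q] [SigmaFinite μ] (hPμ : P ≪ μ) (hQμ : Q ≪ μ) :
    ∫⁻ x, φ (P.rnDeriv (P + Q) x) (Q.rnDeriv (P + Q) x) ∂(P + Q)
      = ∫⁻ x, φ (P.rnDeriv μ x) (Q.rnDeriv μ x) ∂μ := by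
  have hP := Measure.rnDeriv_mul_rnDeriv (κ := μ)
    (Measure.AbsolutelyContinuous.refl P |>.add_right Q)
  have hQ := Measure.rnDeriv_mul_rnDeriv (κ := μ)
    (Measure.AbsolutelyContinuous.refl Q |>.add_right' P)
  have hm : Measurable fun x => φ (P.rnDeriv (P + Q) x) (Q.rnDeriv (P + Q) x) :=
    hφ.comp ((Measure.measurable_rnDeriv _ _).prodMk (Measure.measurable_rnDeriv _ _))
  rw [← lintegral_rnDeriv_mul (hPμ.add_left hQμ) hm.aemeasurable]
  refine lintegral_congr_ae ?_
  filter_upwards [hP, hQ, Measure.rnDeriv_ne_top (P + Q) μ] with x hPx hQx hx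
  rw [← hPx, ← hQx, Pi.mul_apply, Pi.mul_apply, mul_comm (P.rnDeriv _ x),
    mul_comm (Q.rnDeriv _ x), hφ_mul _ _ _ hx]

variable [IsFiniteMeasure P] [IsFiniteMeasure Q] [SigmaFinite μ]

lemma hellingerInt_eq_lintegral_rnDeriv {α : ℝ} (h0 : 0 ≤ α) (h1 : α ≤ 1) (hPμ : P ≪ μ)
    (hQμ : Q ≪ μ) :
    hellingerInt α P Q = ∫⁻ x, P.rnDeriv μ x ^ α * Q.rnDeriv μ x ^ (1 - α) ∂μ := by
  refine lintegral_rnDeriv_add_eq_lintegral_rnDeriv (φ := fun a b => a ^ α * b ^ (1 - α))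
    ((measurable_fst.pow_const _).mul (measurable_snd.pow_const _)) (fun c a b _ => ?_) hPμ hQμ
  rw [ENNReal.mul_rpow_of_nonneg _ _ h0, ENNReal.mul_rpow_of_nonneg _ _ (by linarith),
    mul_mul_mul_comm, ENNReal.rpow_mul_rpow_one_sub h0 h1]

lemma tvDist_eq_lintegral_rnDeriv (hPμ : P ≪ μ) (hQμ : Q ≪ μ) :
    tvDist P Q = ∫⁻ x, (P.rnDeriv μ x - Q.rnDeriv μ x) + (Q.rnDeriv μ x - P.rnDeriv μ x) ∂μ := by
  refine lintegral_rnDeriv_add_eq_lintegral_rnDeriv (φ := fun a b => (a - b) + (b - a))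
    ((measurable_fst.sub measurable_snd).add (measurable_snd.sub measurable_fst))
    (fun c a b hc => ?_) hPμ hQμ
  rw [← ENNReal.mul_sub fun _ _ => hc, ← ENNReal.mul_sub fun _ _ => hc, mul_add]

end DominatingMeasure

lemma hellingerInt_tsub_add_tsub_le {X : Type*} [MeasurableSpace X] {α : ℝ} (h0 : 0 ≤ α)
    (h1 : α ≤ 1) (P₁ Q₁ P₂ Q₂ : Measure X) [IsProbabilityMeasure P₁] [IsProbabilityMeasure Q₁]
    [IsProbabilityMeasure P₂] [IsProbabilityMeasure Q₂] {e : ℝ≥0∞} (he0 : e ≠ 0) (he : e ≠ ∞) :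
    (hellingerInt α P₁ Q₁ - hellingerInt α P₂ Q₂) + (hellingerInt α P₂ Q₂ - hellingerInt α P₁ Q₁)
      ≤ hellingerTVBound α e (tvDist P₁ P₂) (tvDist Q₁ Q₂) := by
  set μ := P₁ + Q₁ + P₂ + Q₂
  have hP₁ : P₁ ≪ μ := ((Measure.AbsolutelyContinuous.rfl.add_right _).add_right _).add_right _
  have hQ₁ : Q₁ ≪ μ := ((Measure.AbsolutelyContinuous.rfl.add_right' _).add_right _).add_right _
  have hP₂ : P₂ ≪ μ := (Measure.AbsolutelyContinuous.rfl.add_right' _).add_right _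
  have hQ₂ : Q₂ ≪ μ := Measure.AbsolutelyContinuous.rfl.add_right' _
  have h_le (R : Measure X) [IsProbabilityMeasure R] : ∫⁻ x, R.rnDeriv μ x ∂μ ≤ 1 :=
    Measure.lintegral_rnDeriv_le.trans_eq measure_univ
  rw [hellingerInt_eq_lintegral_rnDeriv h0 h1 hP₁ hQ₁,
    hellingerInt_eq_lintegral_rnDeriv h0 h1 hP₂ hQ₂, tvDist_eq_lintegral_rnDeriv hP₁ hP₂,
    tvDist_eq_lintegral_rnDeriv hQ₁ hQ₂]
  exact lintegral_rpow_mul_rpow_tsub_add_tsub_le h0 h1 (Measure.measurable_rnDeriv _ _)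
    (Measure.measurable_rnDeriv _ _) (Measure.measurable_rnDeriv _ _)
    (Measure.measurable_rnDeriv _ _) (h_le P₁) (h_le Q₁) (h_le P₂) (h_le Q₂) he0 he

lemma hellingerInt_ne_top {X : Type*} [MeasurableSpace X] {α : ℝ} (h0 : 0 ≤ α) (h1 : α ≤ 1)
    (P Q : Measure X) [IsFiniteMeasure P] [IsFiniteMeasure Q] : hellingerInt α P Q ≠ ∞ := by
  refine ne_top_of_le_ne_top (b := ∫⁻ x, Q.rnDeriv (P + Q) x + P.rnDeriv (P + Q) x ∂(P + Q)) ?_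
    (lintegral_mono fun x => ?_)
  · rw [lintegral_add_left (Measure.measurable_rnDeriv _ _)]
    exact ENNReal.add_ne_top.2
      ⟨ne_top_of_le_ne_top (measure_ne_top Q univ) Measure.lintegral_rnDeriv_le,
        ne_top_of_le_ne_top (measure_ne_top P univ) Measure.lintegral_rnDeriv_le⟩
  · simpa using ENNReal.rpow_mul_rpow_one_sub_le h0 h1 one_ne_zero ENNReal.one_ne_top
      (P.rnDeriv (P + Q) x) (Q.rnDeriv (P + Q) x)

lemma hellingerTVBound_le_of_le {α : ℝ} {e V W : ℝ≥0∞} (he0 : e ≠ 0) (he : e ≠ ∞) (hV : V ≤ e)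
    (hW : W ≤ e) : hellingerTVBound α e V W ≤ e ^ α + e ^ α + e ^ (1 - α) + e ^ (1 - α) := by
  have h_succ (β : ℝ) : e ^ β * e = e ^ (β + 1) := by
    rw [ENNReal.rpow_add _ _ he0 he, ENNReal.rpow_one]
  calc hellingerTVBound α e V W ≤ hellingerTVBound α e e e := by
        unfold hellingerTVBound; gcongr
    _ = _ := by
        rw [hellingerTVBound, h_succ, h_succ, sub_add_cancel, neg_add_eq_sub]

lemma exists_pos_hellingerTVBound_lt {α : ℝ} (h0 : 0 < α) (h1 : α < 1) {η : ℝ≥0∞} (hη : 0 < η) :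
    ∃ δ : ℝ, 0 < δ ∧ ∀ V W, V ≤ ENNReal.ofReal δ → W ≤ ENNReal.ofReal δ →
      hellingerTVBound α (ENNReal.ofReal δ) V W < η := by
  have hlim : Tendsto (fun δ : ℝ => ENNReal.ofReal δ ^ α + ENNReal.ofReal δ ^ α
      + ENNReal.ofReal δ ^ (1 - α) + ENNReal.ofReal δ ^ (1 - α)) (𝓝[>] 0) (𝓝 0) := by
    have hpow (β : ℝ) : Continuous fun δ : ℝ => ENNReal.ofReal δ ^ β :=
      ENNReal.continuous_rpow_const.comp ENNReal.continuous_ofReal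
    have hc : Continuous fun δ : ℝ => ENNReal.ofReal δ ^ α + ENNReal.ofReal δ ^ α
        + ENNReal.ofReal δ ^ (1 - α) + ENNReal.ofReal δ ^ (1 - α) := by fun_prop
    simpa [ENNReal.zero_rpow_of_pos h0, ENNReal.zero_rpow_of_pos (sub_pos.2 h1)] using
      (hc.tendsto 0).mono_left nhdsWithin_le_nhds
  obtain ⟨δ, hδη, hδ⟩ := ((hlim.eventually (gt_mem_nhds hη)).and self_mem_nhdsWithin).exists
  exact ⟨δ, hδ, fun V W hV hW => (hellingerTVBound_le_of_le (ENNReal.ofReal_pos.2 hδ).ne'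
    ENNReal.ofReal_ne_top hV hW).trans_lt hδη⟩

section RenyiOfHellinger

variable {α ε : ℝ}

lemma inv_le_mul_log_of_le_exp (hα : α < 1) (hε : 0 < ε) {H : ℝ≥0∞}
    (hH : H ≤ ENNReal.ofReal (exp ((α - 1) / ε))) :
    ((ε⁻¹ : ℝ) : EReal) ≤ (((α - 1)⁻¹ : ℝ) : EReal) * ENNReal.log H := by
  have hlog : ENNReal.log H ≤ (((α - 1) / ε : ℝ) : EReal) :=
    calc ENNReal.log H ≤ ENNReal.log (ENNReal.ofReal (exp ((α - 1) / ε))) := ENNReal.log_le_log hH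
      _ = _ := by rw [ENNReal.log_ofReal_of_pos (exp_pos _), Real.log_exp]
  calc ((ε⁻¹ : ℝ) : EReal) = (((α - 1) / ε : ℝ) : EReal) * (((α - 1)⁻¹ : ℝ) : EReal) := by
        rw [← EReal.coe_mul]
        congr 1
        field_simp [(sub_neg.2 hα).ne]
    _ ≤ ENNReal.log H * (((α - 1)⁻¹ : ℝ) : EReal) :=
        EReal.mul_le_mul_of_nonpos_right hlog (by exact_mod_cast (inv_neg''.2 (sub_neg.2 hα)).le)
    _ = _ := mul_comm _ _

lemma mul_log_le_mul_log_add (hα : α < 1) {h₁ h₂ : ℝ} (hh₁ : 0 < h₁) (hh₂ : 0 < h₂)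
    (h : h₂ ≤ (1 + (1 - α) * ε) * h₁) :
    (α - 1)⁻¹ * Real.log h₁ ≤ (α - 1)⁻¹ * Real.log h₂ + ε := by
  have hα' : 0 < 1 - α := sub_pos.2 hα
  have hk : 0 < 1 + (1 - α) * ε := pos_of_mul_pos_left (hh₂.trans_le h) hh₁.le
  have hlog : Real.log h₂ ≤ (1 - α) * ε + Real.log h₁ :=
    calc Real.log h₂ ≤ Real.log ((1 + (1 - α) * ε) * h₁) := Real.log_le_log hh₂ h
      _ = Real.log (1 + (1 - α) * ε) + Real.log h₁ := Real.log_mul hk.ne' hh₁.ne'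
      _ ≤ (1 - α) * ε + Real.log h₁ := by linarith [Real.log_le_sub_one_of_pos hk]
  have hsub : (α - 1)⁻¹ * Real.log h₁ - (α - 1)⁻¹ * Real.log h₂
      = (Real.log h₂ - Real.log h₁) / (1 - α) := by
    field_simp [hα'.ne', (sub_neg.2 hα).ne]
    ring
  rw [← sub_le_iff_le_add', hsub, div_le_iff₀ hα']
  linarith

lemma exists_pos_mul_log_close (hα : α < 1) (hε : 0 < ε) :
    ∃ η : ℝ≥0∞, 0 < η ∧ ∀ H₁ H₂ : ℝ≥0∞, H₁ ≠ ∞ → H₂ ≠ ∞ → (H₁ - H₂) + (H₂ - H₁) ≤ η →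
      ((((ε⁻¹ : ℝ) : EReal) ≤ (((α - 1)⁻¹ : ℝ) : EReal) * ENNReal.log H₁ ∧
          ((ε⁻¹ : ℝ) : EReal) ≤ (((α - 1)⁻¹ : ℝ) : EReal) * ENNReal.log H₂) ∨
        ((((α - 1)⁻¹ : ℝ) : EReal) * ENNReal.log H₁
            ≤ (((α - 1)⁻¹ : ℝ) : EReal) * ENNReal.log H₂ + ((ε : ℝ) : EReal) ∧
          (((α - 1)⁻¹ : ℝ) : EReal) * ENNReal.log H₂
            ≤ (((α - 1)⁻¹ : ℝ) : EReal) * ENNReal.log H₁ + ((ε : ℝ) : EReal))) := by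
  set b := exp ((α - 1) / ε)
  have hb : 0 < b := exp_pos _
  -- Below `b` both values exceed `ε⁻¹`; above `b / 2` the logarithm is `(2 / b)`-Lipschitz.
  set η := min (b / 2) ((1 - α) * ε * (b / 2))
  have hη : 0 < η := lt_min (by positivity) (mul_pos (mul_pos (sub_pos.2 hα) hε) (by positivity))
  refine ⟨ENNReal.ofReal η, ENNReal.ofReal_pos.2 hη, fun H₁ H₂ hH₁ hH₂ hH => ?_⟩
  by_cases hsmall : H₁ ≤ ENNReal.ofReal b ∧ H₂ ≤ ENNReal.ofReal b
  · exact .inl ⟨inv_le_mul_log_of_le_exp hα hε hsmall.1, inv_le_mul_log_of_le_exp hα hε hsmall.2⟩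
  rw [ENNReal.le_ofReal_iff_toReal_le hH₁ hb.le, ENNReal.le_ofReal_iff_toReal_le hH₂ hb.le]
    at hsmall
  have h₁₂ : H₁.toReal ≤ H₂.toReal + η := by
    simpa [hη.le] using ENNReal.toReal_le_add
      (le_add_tsub.trans (add_le_add le_rfl (le_self_add.trans hH))) hH₂ ENNReal.ofReal_ne_top
  have h₂₁ : H₂.toReal ≤ H₁.toReal + η := by
    simpa [hη.le] using ENNReal.toReal_le_add
      (le_add_tsub.trans (add_le_add le_rfl (le_add_self.trans hH))) hH₁ ENNReal.ofReal_ne_top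
  have hη₁ : η ≤ b / 2 := min_le_left _ _
  have hη₂ : η ≤ (1 - α) * ε * (b / 2) := min_le_right _ _
  have hm₁ : b / 2 ≤ H₁.toReal := by
    by_contra! h; exact hsmall ⟨by linarith, by linarith⟩
  have hm₂ : b / 2 ≤ H₂.toReal := by
    by_contra! h; exact hsmall ⟨by linarith, by linarith⟩
  have hpos₁ : 0 < H₁.toReal := by linarith
  have hpos₂ : 0 < H₂.toReal := by linarith
  have hk : 0 ≤ (1 - α) * ε := mul_nonneg (sub_pos.2 hα).le hε.le
  have hclose {h h' : ℝ} (hm : b / 2 ≤ h) (hh' : 0 < h') (hle : h' ≤ h + η) :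
      (α - 1)⁻¹ * Real.log h ≤ (α - 1)⁻¹ * Real.log h' + ε :=
    mul_log_le_mul_log_add hα (by linarith) hh' (by nlinarith)
  rw [ENNReal.log_pos_real (ENNReal.toReal_pos_iff.1 hpos₁).1.ne' hH₁,
    ENNReal.log_pos_real (ENNReal.toReal_pos_iff.1 hpos₂).1.ne' hH₂]
  exact .inr ⟨by exact_mod_cast hclose hm₁ hpos₂ h₂₁, by exact_mod_cast hclose hm₂ hpos₁ h₁₂⟩

end RenyiOfHellinger

/-- Closeness of two values in `[0, ∞]` is expressed as: both are at least `ε⁻¹`, or they are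
within `ε` of each other. -/
theorem renyiDiv_uniformly_continuous_tv
    {X : Type*} [MeasurableSpace X] (α : ℝ) (hα0 : 0 < α) (hα1 : α < 1) :
    (∀ (P₁ Q₁ P₂ Q₂ : Measure X),
      IsProbabilityMeasure P₁ → IsProbabilityMeasure Q₁ →
      IsProbabilityMeasure P₂ → IsProbabilityMeasure Q₂ →
      ∀ (μ : Measure X) [SigmaFinite μ], ∀ (p₁ q₁ p₂ q₂ : X → ℝ≥0∞),
      Measurable p₁ → Measurable q₁ → Measurable p₂ → Measurable q₂ →
      P₁ = μ.withDensity p₁ → Q₁ = μ.withDensity q₁ →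
      P₂ = μ.withDensity p₂ → Q₂ = μ.withDensity q₂ →
      ∀ ε : ℝ, 0 < ε →
      ((∫⁻ x, p₁ x ^ α * q₁ x ^ (1 - α) ∂μ) - ∫⁻ x, p₂ x ^ α * q₂ x ^ (1 - α) ∂μ)
        + ((∫⁻ x, p₂ x ^ α * q₂ x ^ (1 - α) ∂μ) - ∫⁻ x, p₁ x ^ α * q₁ x ^ (1 - α) ∂μ)
      ≤ ENNReal.ofReal ε ^ α
        + ENNReal.ofReal ε ^ (α - 1) * ∫⁻ x, ((p₁ x - p₂ x) + (p₂ x - p₁ x)) ∂μ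
        + ENNReal.ofReal ε ^ (1 - α)
        + ENNReal.ofReal ε ^ (-α) * ∫⁻ x, ((q₁ x - q₂ x) + (q₂ x - q₁ x)) ∂μ) ∧
    (∀ ε : ℝ, 0 < ε → ∃ δ : ℝ, 0 < δ ∧
      ∀ (P₁ Q₁ P₂ Q₂ : Measure X),
        IsProbabilityMeasure P₁ → IsProbabilityMeasure Q₁ →
        IsProbabilityMeasure P₂ → IsProbabilityMeasure Q₂ →
        tvDist P₁ P₂ < ENNReal.ofReal δ → tvDist Q₁ Q₂ < ENNReal.ofReal δ →
        ((((ε⁻¹ : ℝ) : EReal) ≤ renyiSimple α P₁ Q₁ ∧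
          ((ε⁻¹ : ℝ) : EReal) ≤ renyiSimple α P₂ Q₂) ∨
         (renyiSimple α P₁ Q₁ ≤ renyiSimple α P₂ Q₂ + ((ε : ℝ) : EReal) ∧
          renyiSimple α P₂ Q₂ ≤ renyiSimple α P₁ Q₁ + ((ε : ℝ) : EReal)))) := by
  refine ⟨fun P₁ Q₁ P₂ Q₂ hP₁ hQ₁ hP₂ hQ₂ μ _ p₁ q₁ p₂ q₂ hp₁ hq₁ hp₂ hq₂ hP₁d hQ₁d hP₂d hQ₂d ε hε
    => ?_, fun ε hε => ?_⟩
  · have h_le {R : Measure X} {r : X → ℝ≥0∞} (hR : IsProbabilityMeasure R)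
        (hr : R = μ.withDensity r) : ∫⁻ x, r x ∂μ ≤ 1 := by
      rw [← setLIntegral_univ, ← withDensity_apply _ MeasurableSet.univ, ← hr, measure_univ]
    exact lintegral_rpow_mul_rpow_tsub_add_tsub_le hα0.le hα1.le hp₁ hq₁ hp₂ hq₂ (h_le hP₁ hP₁d)
      (h_le hQ₁ hQ₁d) (h_le hP₂ hP₂d) (h_le hQ₂ hQ₂d) (ENNReal.ofReal_pos.2 hε).ne'
      ENNReal.ofReal_ne_top
  · obtain ⟨η, hη, hclose⟩ := exists_pos_mul_log_close hα1 hε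
    obtain ⟨δ, hδ, hbound⟩ := exists_pos_hellingerTVBound_lt hα0 hα1 hη
    refine ⟨δ, hδ, fun P₁ Q₁ P₂ Q₂ _ _ _ _ hP hQ => hclose (hellingerInt α P₁ Q₁)
      (hellingerInt α P₂ Q₂) (hellingerInt_ne_top hα0.le hα1.le _ _)
      (hellingerInt_ne_top hα0.le hα1.le _ _) ?_⟩
    exact (hellingerInt_tsub_add_tsub_le hα0.le hα1.le P₁ Q₁ P₂ Q₂ (ENNReal.ofReal_pos.2 hδ).ne'
      ENNReal.ofReal_ne_top).trans (hbound _ _ hP.le hQ.le).le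
end

section
/- For probability measures P and Q on a measurable space (X, 𝓐) with densities p, q with respect to a common σ-finite dominating measure μ, the following conditions are equivalent: (i) P and Q are mutually singular (P ⊥ Q); (ii) Q({x : p(x) > 0}) = 0; (iii) D_α(P‖Q) = ∞ for some α ∈ [0,1); (iv) D_α(P‖Q) = ∞ for all α ∈ [0,∞]. -/
open MeasureTheory Real Filter Set
open scoped ENNReal NNReal Topology Classical

/-! Let `f, g` be the densities of `P, Q` with respect to `P + Q`; singularity means `f = 0 ∨ g = 0`
almost everywhere. Then for `α ∈ (0, 1)` the Hellinger integrand `f ^ α * g ^ (1 - α)` vanishes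
a.e., so `D_α = (α - 1)⁻¹ log 0 = ∞`, while for `α > 1` it is infinite on `{f ≠ 0, g = 0}`, a set
of full `P`-measure, so again `D_α = ∞`; the extended orders are limits of these constant values.
If `P` and `Q` are not singular, their overlap `c = ∫ min f g` is positive, and
`c ≤ H_α ≤ P(X) + Q(X)` for `α ∈ (0, 1)`, so `D_α ≤ (1 - α)⁻¹ |log c|` stays bounded as `α ↓ 0`. -/

section WithDensity

variable {X : Type*} [MeasurableSpace X] {ν : Measure X} {f g : X → ℝ≥0∞}

lemma withDensity_mutuallySingular_iff (hf : Measurable f) :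
    ν.withDensity f ⟂ₘ ν.withDensity g ↔ ν.withDensity g {x | f x ≠ 0} = 0 := by
  constructor
  · rintro ⟨A, hA, hfA, hgA⟩
    have hgA' : ν.withDensity g ({x | f x ≠ 0} ∩ A) = 0 :=
      withDensity_absolutelyContinuous ν g ((withDensity_apply_eq_zero hf).mp hfA)
    rw [← measure_inter_add_sdiff _ hA, hgA', zero_add]
    exact measure_mono_null (fun x hx => hx.2) hgA
  · intro h
    refine ⟨{x | f x = 0}, hf (measurableSet_singleton 0), ?_, h⟩
    rw [withDensity_apply_eq_zero hf]
    exact measure_mono_null (fun x hx => hx.1 hx.2) measure_empty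

lemma withDensity_mutuallySingular_iff_ae (hf : Measurable f) (hg : AEMeasurable g ν) :
    ν.withDensity f ⟂ₘ ν.withDensity g ↔ ∀ᵐ x ∂ν, f x = 0 ∨ g x = 0 := by
  rw [withDensity_mutuallySingular_iff hf, withDensity_apply_eq_zero' hg, ae_iff, ← ofPred_and]
  simp only [not_or, ne_eq, and_comm]

end WithDensity

namespace ENNReal

variable {a : ℝ}

lemma rpow_mul_rpow_one_sub_self (ha0 : 0 ≤ a) (ha1 : a ≤ 1) (x : ℝ≥0∞) :
    x ^ a * x ^ (1 - a) = x := by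
  rw [← rpow_add_of_nonneg _ _ ha0 (sub_nonneg.2 ha1), add_sub_cancel, rpow_one]

lemma min_le_rpow_mul_rpow_one_sub (ha0 : 0 ≤ a) (ha1 : a ≤ 1) (x y : ℝ≥0∞) :
    min x y ≤ x ^ a * y ^ (1 - a) := by
  conv_lhs => rw [← rpow_mul_rpow_one_sub_self ha0 ha1 (min x y)]
  exact mul_le_mul' (rpow_le_rpow (min_le_left x y) ha0)
    (rpow_le_rpow (min_le_right x y) (sub_nonneg.2 ha1))

lemma rpow_mul_rpow_one_sub_le_max (ha0 : 0 ≤ a) (ha1 : a ≤ 1) (x y : ℝ≥0∞) :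
    x ^ a * y ^ (1 - a) ≤ max x y := by
  conv_rhs => rw [← rpow_mul_rpow_one_sub_self ha0 ha1 (max x y)]
  exact mul_le_mul' (rpow_le_rpow (le_max_left x y) ha0)
    (rpow_le_rpow (le_max_right x y) (sub_nonneg.2 ha1))

end ENNReal

section Hellinger

variable {X : Type*} [MeasurableSpace X] {P Q : Measure X} {a : ℝ}

lemma mutuallySingular_iff_ae_rnDeriv_add [SigmaFinite P] [SigmaFinite Q] :
    P ⟂ₘ Q ↔ ∀ᵐ x ∂(P + Q), P.rnDeriv (P + Q) x = 0 ∨ Q.rnDeriv (P + Q) x = 0 := by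
  have h := withDensity_mutuallySingular_iff_ae (ν := P + Q) (Measure.measurable_rnDeriv P (P + Q))
    (Measure.measurable_rnDeriv Q (P + Q)).aemeasurable
  rwa [Measure.withDensity_rnDeriv_eq _ _ (Measure.AbsolutelyContinuous.rfl.add_right Q),
    Measure.withDensity_rnDeriv_eq _ _
      (Measure.absolutelyContinuous_of_le (Measure.le_add_left le_rfl))] at h

lemma hellingerInt_le_add (ha0 : 0 ≤ a) (ha1 : a ≤ 1) :
    hellingerInt a P Q ≤ P univ + Q univ :=
  calc hellingerInt a P Q
      ≤ ∫⁻ x, (P.rnDeriv (P + Q) x + Q.rnDeriv (P + Q) x) ∂(P + Q) := lintegral_mono fun _ =>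
        (ENNReal.rpow_mul_rpow_one_sub_le_max ha0 ha1 _ _).trans (max_le le_self_add le_add_self)
    _ = ∫⁻ x, P.rnDeriv (P + Q) x ∂(P + Q) + ∫⁻ x, Q.rnDeriv (P + Q) x ∂(P + Q) :=
        lintegral_add_left (Measure.measurable_rnDeriv _ _) _
    _ ≤ P univ + Q univ := add_le_add Measure.lintegral_rnDeriv_le Measure.lintegral_rnDeriv_le

noncomputable def overlap (P Q : Measure X) : ℝ≥0∞ :=
  ∫⁻ x, min (P.rnDeriv (P + Q) x) (Q.rnDeriv (P + Q) x) ∂(P + Q)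

lemma overlap_le_hellingerInt (ha0 : 0 ≤ a) (ha1 : a ≤ 1) : overlap P Q ≤ hellingerInt a P Q :=
  lintegral_mono fun _ => ENNReal.min_le_rpow_mul_rpow_one_sub ha0 ha1 _ _

lemma overlap_ne_zero_of_not_mutuallySingular [SigmaFinite P] [SigmaFinite Q]
    (h : ¬ P ⟂ₘ Q) : overlap P Q ≠ 0 := by
  rw [mutuallySingular_iff_ae_rnDeriv_add] at h
  contrapose! h
  rw [overlap, lintegral_eq_zero_iff (by fun_prop)] at h
  filter_upwards [h] with x hx
  simpa using hx

variable [SigmaFinite P] [SigmaFinite Q]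

lemma hellingerInt_eq_zero_of_mutuallySingular (h : P ⟂ₘ Q) (ha0 : 0 < a) (ha1 : a < 1) :
    hellingerInt a P Q = 0 := by
  refine (lintegral_congr_ae ?_).trans lintegral_zero
  filter_upwards [mutuallySingular_iff_ae_rnDeriv_add.mp h] with x hx
  rcases hx with hx | hx <;> simp [hx, ENNReal.zero_rpow_of_pos, ha0, ha1]

lemma hellingerInt_eq_top_of_mutuallySingular [NeZero P] (h : P ⟂ₘ Q) (ha : 1 < a) :
    hellingerInt a P Q = ⊤ := by
  have hP : P ≪ P + Q := Measure.AbsolutelyContinuous.rfl.add_right Q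
  have h_top : ∀ᵐ x ∂P, P.rnDeriv (P + Q) x ^ a * Q.rnDeriv (P + Q) x ^ (1 - a) = ⊤ := by
    filter_upwards [Measure.rnDeriv_pos hP, hP.ae_le (mutuallySingular_iff_ae_rnDeriv_add.mp h)]
      with x hpos hx
    have hg : Q.rnDeriv (P + Q) x = 0 := hx.resolve_left hpos.ne'
    rw [hg, ENNReal.zero_rpow_of_neg (by linarith), ENNReal.mul_top]
    exact (ENNReal.rpow_eq_zero_iff_of_pos (by linarith)).not.mpr hpos.ne'
  exact lintegral_eq_top_of_measure_eq_top_ne_zero (by fun_prop)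
    fun h0 => frequently_ae_iff.mp h_top.frequently (hP h0)

end Hellinger

section Renyi

variable {X : Type*} [MeasurableSpace X] {P Q : Measure X} {a : ℝ}

lemma renyiSimple_eq_top_of_mutuallySingular [SigmaFinite P] [SigmaFinite Q] [NeZero P]
    (h : P ⟂ₘ Q) (ha0 : 0 < a) (ha1 : a ≠ 1) : renyiSimple a P Q = ⊤ := by
  rcases ha1.lt_or_gt with ha1 | ha1
  · rw [renyiSimple, hellingerInt_eq_zero_of_mutuallySingular h ha0 ha1, ENNReal.log_zero,
      EReal.coe_mul_bot_of_neg (inv_lt_zero.2 (sub_neg.2 ha1))]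
  · rw [renyiSimple, hellingerInt_eq_top_of_mutuallySingular h ha1, ENNReal.log_top,
      EReal.coe_mul_top_of_pos (inv_pos.2 (sub_pos.2 ha1))]

lemma limsup_renyiSimple_eq_top_of_mutuallySingular [SigmaFinite P] [SigmaFinite Q] [NeZero P]
    (h : P ⟂ₘ Q) {l : Filter ℝ} [l.NeBot] (hl : ∀ᶠ a in l, 0 < a ∧ a ≠ 1) :
    limsup (fun a => renyiSimple a P Q) l = ⊤ := by
  rw [limsup_congr (hl.mono fun a ha => renyiSimple_eq_top_of_mutuallySingular h ha.1 ha.2),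
    limsup_const]

lemma renyiDiv_eq_top_of_mutuallySingular [SigmaFinite P] [SigmaFinite Q] [NeZero P]
    (h : P ⟂ₘ Q) (α : ℝ≥0∞) : renyiDiv α P Q = ⊤ := by
  unfold renyiDiv
  split_ifs with h0 h1 htop
  · exact limsup_renyiSimple_eq_top_of_mutuallySingular h <|
      mem_of_superset (Ioo_mem_nhdsGT one_pos) fun a ha => ⟨ha.1, ha.2.ne⟩
  · exact limsup_renyiSimple_eq_top_of_mutuallySingular h <|
      mem_of_superset (Ioo_mem_nhdsLT one_pos) fun a ha => ⟨ha.1, ha.2.ne⟩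
  · exact limsup_renyiSimple_eq_top_of_mutuallySingular h <|
      (eventually_gt_atTop 1).mono fun a ha => ⟨one_pos.trans ha, ha.ne'⟩
  · refine renyiSimple_eq_top_of_mutuallySingular h (ENNReal.toReal_pos h0 htop) ?_
    rwa [Ne, ENNReal.toReal_eq_one_iff]

lemma renyiSimple_le_of_not_mutuallySingular [IsFiniteMeasure P] [IsFiniteMeasure Q]
    (h : ¬ P ⟂ₘ Q) (ha0 : 0 < a) (ha1 : a < 1) :
    renyiSimple a P Q ≤ ((1 - a)⁻¹ * |Real.log (overlap P Q).toReal| : ℝ) := by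
  set c := overlap P Q
  set H := hellingerInt a P Q
  have hcH : c ≤ H := overlap_le_hellingerInt ha0.le ha1.le
  have hc0 : c ≠ 0 := overlap_ne_zero_of_not_mutuallySingular h
  have hH0 : H ≠ 0 := ((pos_iff_ne_zero.2 hc0).trans_le hcH).ne'
  have hH : H ≠ ⊤ := ne_top_of_le_ne_top (by finiteness) (hellingerInt_le_add ha0.le ha1.le)
  have hlog : Real.log c.toReal ≤ Real.log H.toReal :=
    Real.log_le_log (ENNReal.toReal_pos hc0 (ne_top_of_le_ne_top hH hcH))
      (ENNReal.toReal_mono hH hcH)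
  rw [renyiSimple, ENNReal.log_pos_real hH0 hH, ← EReal.coe_mul, EReal.coe_le_coe_iff,
    ← neg_sub 1 a, inv_neg, neg_mul, ← mul_neg]
  exact mul_le_mul_of_nonneg_left (by linarith [neg_le_abs (Real.log c.toReal)])
    (inv_nonneg.2 (sub_nonneg.2 ha1.le))

lemma renyiDiv_ne_top_of_not_mutuallySingular [IsFiniteMeasure P] [IsFiniteMeasure Q]
    (h : ¬ P ⟂ₘ Q) {α : ℝ≥0∞} (hα : α < 1) : renyiDiv α P Q ≠ ⊤ := by
  set K := |Real.log (overlap P Q).toReal|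
  rcases eq_or_ne α 0 with rfl | h0
  · rw [renyiDiv, if_pos rfl]
    refine ne_top_of_le_ne_top (EReal.coe_ne_top (2 * K))
      (limsup_le_of_le (by isBoundedDefault) ?_)
    filter_upwards [Ioo_mem_nhdsGT (by norm_num : (0 : ℝ) < 1 / 2)] with a ha
    refine (renyiSimple_le_of_not_mutuallySingular h ha.1 (by linarith [ha.2])).trans ?_
    have hinv : (1 - a)⁻¹ ≤ 2 := by
      rw [inv_le_comm₀ (by linarith [ha.2]) two_pos]
      linarith [ha.2]
    exact EReal.coe_le_coe_iff.2 (mul_le_mul_of_nonneg_right hinv (abs_nonneg _))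
  · have htop : α ≠ ⊤ := hα.ne_top
    rw [renyiDiv, if_neg h0, if_neg hα.ne, if_neg htop]
    have hα' : α.toReal < 1 := by
      simpa using (ENNReal.toReal_lt_toReal htop ENNReal.one_ne_top).mpr hα
    exact ne_top_of_le_ne_top (EReal.coe_ne_top _)
      (renyiSimple_le_of_not_mutuallySingular h (ENNReal.toReal_pos h0 htop) hα')

lemma renyiDiv_eq_top_iff_mutuallySingular [IsFiniteMeasure P] [IsFiniteMeasure Q] [NeZero P]
    {α : ℝ≥0∞} (hα : α < 1) : renyiDiv α P Q = ⊤ ↔ P ⟂ₘ Q :=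
  ⟨fun h => by_contra fun h' => renyiDiv_ne_top_of_not_mutuallySingular h' hα h,
    fun h => renyiDiv_eq_top_of_mutuallySingular h α⟩

end Renyi

theorem renyiDiv_mutuallySingular_iff_general
    {X : Type*} [MeasurableSpace X] (P Q : Measure X)
    [IsProbabilityMeasure P] [IsProbabilityMeasure Q]
    (μ : Measure X) (p q : X → ℝ≥0∞)
    (hp : Measurable p)
    (hP : P = μ.withDensity p) (hQ : Q = μ.withDensity q) :
    (Measure.MutuallySingular P Q ↔ Q {x | 0 < p x} = 0) ∧
    (Measure.MutuallySingular P Q ↔ ∃ α : ℝ≥0∞, α < 1 ∧ renyiDiv α P Q = ⊤) ∧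
    (Measure.MutuallySingular P Q ↔ ∀ α : ℝ≥0∞, renyiDiv α P Q = ⊤) := by
  refine ⟨?_, ⟨fun h => ⟨0, zero_lt_one, renyiDiv_eq_top_of_mutuallySingular h 0⟩,
      fun ⟨_, hα, h⟩ => (renyiDiv_eq_top_iff_mutuallySingular hα).mp h⟩,
    ⟨fun h α => renyiDiv_eq_top_of_mutuallySingular h α,
      fun h => (renyiDiv_eq_top_iff_mutuallySingular zero_lt_one).mp (h 0)⟩⟩
  subst hP hQ
  simpa only [pos_iff_ne_zero] using withDensity_mutuallySingular_iff hp

/-- **Mutual singularity.** For probability measures `P, Q` with densities `p, q`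
with respect to a common σ-finite dominating measure `μ`, the following are
equivalent: (i) `P ⊥ Q`; (ii) `Q({p > 0}) = 0`; (iii) `D_α(P‖Q) = ∞` for some
`α ∈ [0,1)`; (iv) `D_α(P‖Q) = ∞` for all `α ∈ [0,∞]`. -/
theorem renyiDiv_mutuallySingular_iff
    {X : Type*} [MeasurableSpace X] (P Q : Measure X)
    [IsProbabilityMeasure P] [IsProbabilityMeasure Q]
    (μ : Measure X) [SigmaFinite μ] (p q : X → ℝ≥0∞)
    (hp : Measurable p) (hq : Measurable q)
    (hP : P = μ.withDensity p) (hQ : Q = μ.withDensity q) :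
    (Measure.MutuallySingular P Q ↔ Q {x | 0 < p x} = 0) ∧
    (Measure.MutuallySingular P Q ↔ ∃ α : ℝ≥0∞, α < 1 ∧ renyiDiv α P Q = ⊤) ∧
    (Measure.MutuallySingular P Q ↔ ∀ α : ℝ≥0∞, renyiDiv α P Q = ⊤) :=
  renyiDiv_mutuallySingular_iff_general P Q μ p q hp hP hQ
end
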